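/- Let K be a convex body in ℂⁿ with 2 ≤ k < n, such that the Hermitian orthogonal projection of K onto every k-dimensional complex subspace is a complex ellipsoid of dimension k. Then K is a complex ellipsoid. -/

import Mathlib

def IsConvexBody {n : ℕ} (K : Set (EuclideanSpace ℂ (Fin n))) : Prop :=
  IsCompact K ∧ Convex ℝ K ∧ (interior K).Nonempty

def IsComplexEllipsoid {n : ℕ} (K : Set (EuclideanSpace ℂ (Fin n))) : Prop :=
  ∃ (L : EuclideanSpace ℂ (Fin n) ≃ₗ[ℂ] EuclideanSpace ℂ (Fin n))
    (b : EuclideanSpace ℂ (Fin n)),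
    K = (fun x => L x + b) '' Metric.closedBall 0 1

def IsEllipsoidOfDim {n : ℕ} (k : ℕ) (A : Set (EuclideanSpace ℂ (Fin n))) : Prop :=
  ∃ (f : EuclideanSpace ℂ (Fin k) →ₗ[ℂ] EuclideanSpace ℂ (Fin n))
    (b : EuclideanSpace ℂ (Fin n)), Function.Injective f ∧
    A = (fun x => f x + b) '' Metric.closedBall 0 1

/-!
Let `h u = max_{x ∈ K} Re ⟪u, x⟫` be the support function of `K`. Any two vectors lie in a
common `k`-dimensional subspace `V`; for `u ∈ V` the support function of `K` is that of its
projection onto `V`, an ellipsoid `f(B) + c`, so `h w = Re ⟪w, c⟫ + ‖f† w‖` on every complex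
plane. Hence the odd part of `h` is `ℝ`-linear, i.e. `Re ⟪·, c⟫`, and the even part is a norm
(definite because `K` has interior points) satisfying the parallelogram law, i.e. `‖S ·‖` for a
linear automorphism `S`. Then `K` and the ellipsoid `L(B) + c` with `L† = S` have the same
support function, and closed convex sets are determined by their support functions.
-/

open Module Submodule Complex Topology
open scoped InnerProductSpace

theorem Submodule.exists_le_finrank_eq {K V : Type*} [DivisionRing K] [AddCommGroup V]
    [Module K V] [FiniteDimensional K V] (W : Submodule K V) {m : ℕ} (hW : finrank K W ≤ m)
    (hm : m ≤ finrank K V) : ∃ U : Submodule K V, W ≤ U ∧ finrank K U = m := by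
  induction m with
  | zero => exact ⟨W, le_rfl, by omega⟩
  | succ m ih =>
    rcases hW.eq_or_lt with hW | hW
    · exact ⟨W, le_rfl, hW⟩
    obtain ⟨U, hWU, hU⟩ := ih (by omega) (by omega)
    obtain ⟨x, -, hx⟩ := SetLike.exists_of_lt (lt_top_of_finrank_lt_finrank (s := U) (by omega))
    exact ⟨U ⊔ K ∙ x, hWU.trans le_sup_left, by rw [finrank_sup_span_singleton hx, hU]⟩

theorem Submodule.exists_finrank_eq_mem_mem {K V : Type*} [DivisionRing K] [AddCommGroup V]
    [Module K V] [FiniteDimensional K V] {m : ℕ} (hm : 2 ≤ m) (hmV : m ≤ finrank K V) (u v : V) :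
    ∃ U : Submodule K V, finrank K U = m ∧ u ∈ U ∧ v ∈ U := by
  classical
  have hpair : finrank K (span K {u, v}) ≤ m := by
    have := finrank_span_finset_le_card (R := K) ({u, v} : Finset V)
    rw [Finset.coe_pair] at this
    exact this.trans (Finset.card_le_two.trans hm)
  obtain ⟨U, hle, hU⟩ := (span K {u, v}).exists_le_finrank_eq hpair hmV
  exact ⟨U, hU, hle (subset_span (by simp)), hle (subset_span (by simp))⟩

def Renormed (E : Type*) : Type _ := E

instance {E : Type*} [AddCommGroup E] : AddCommGroup (Renormed E) := ‹AddCommGroup E›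

instance {R E : Type*} [Semiring R] [AddCommGroup E] [Module R E] : Module R (Renormed E) :=
  ‹Module R E›

instance {R E : Type*} [Semiring R] [AddCommGroup E] [Module R E] [Module.Finite R E] :
    Module.Finite R (Renormed E) :=
  ‹Module.Finite R E›

section RCLike

variable {𝕜 E F : Type*} [RCLike 𝕜] [NormedAddCommGroup E] [InnerProductSpace 𝕜 E]
  [FiniteDimensional 𝕜 E] [NormedAddCommGroup F] [InnerProductSpace 𝕜 F]

theorem exists_linearEquiv_norm_eq_of_parallelogram (g : E → ℝ)
    (eq_zero : ∀ u, g u = 0 → u = 0) (add_le : ∀ u v, g (u + v) ≤ g u + g v)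
    (smul : ∀ (a : 𝕜) u, g (a • u) = ‖a‖ * g u)
    (parallelogram : ∀ u v, g (u + v) * g (u + v) + g (u - v) * g (u - v)
      = 2 * (g u * g u + g v * g v)) :
    ∃ S : E ≃ₗ[𝕜] E, ∀ u, g u = ‖S u‖ := by
  have map_zero : g 0 = 0 := by simpa using smul 0 0
  have map_neg : ∀ u, g (-u) = g u := fun u => by simpa using smul (-1) u
  let _ : NormedAddCommGroup (Renormed E) := AddGroupNorm.toNormedAddCommGroup
    { toFun := g
      map_zero' := map_zero
      add_le' := add_le
      neg' := map_neg
      eq_zero_of_map_eq_zero' := eq_zero }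
  let _ : NormedSpace 𝕜 (Renormed E) := ⟨fun a u => (smul a u).le⟩
  let _ : InnerProductSpace 𝕜 (Renormed E) := InnerProductSpace.ofNorm 𝕜 parallelogram
  let e : Renormed E ≃ₗᵢ[𝕜] E :=
    (stdOrthonormalBasis 𝕜 (Renormed E)).equiv (stdOrthonormalBasis 𝕜 E) (finCongr rfl)
  exact ⟨e.toLinearEquiv, fun u => (e.norm_map u).symm⟩

theorem exists_linearEquiv_norm_eq_of_span_pair (g : E → ℝ)
    (hg : ∀ u v : E, ∃ T : E →ₗ[𝕜] F, ∀ w ∈ span 𝕜 {u, v}, g w = ‖T w‖)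
    (hpos : ∀ w ≠ 0, 0 < g w) : ∃ S : E ≃ₗ[𝕜] E, ∀ w, g w = ‖S w‖ := by
  have hu : ∀ u v : E, u ∈ span 𝕜 {u, v} := fun u v => subset_span (by simp)
  have hv : ∀ u v : E, v ∈ span 𝕜 {u, v} := fun u v => subset_span (by simp)
  refine exists_linearEquiv_norm_eq_of_parallelogram g (fun u hu0 => ?_) (fun u v => ?_)
    (fun a u => ?_) (fun u v => ?_)
  · by_contra hne
    exact (hpos u hne).ne' hu0
  · obtain ⟨T, hT⟩ := hg u v
    rw [hT _ (add_mem (hu u v) (hv u v)), hT u (hu u v), hT v (hv u v), map_add]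
    exact norm_add_le _ _
  · obtain ⟨T, hT⟩ := hg u u
    rw [hT _ (smul_mem _ a (hu u u)), hT u (hu u u), map_smul, norm_smul]
  · obtain ⟨T, hT⟩ := hg u v
    rw [hT _ (add_mem (hu u v) (hv u v)), hT _ (sub_mem (hu u v) (hv u v)), hT u (hu u v),
      hT v (hv u v), map_add, map_sub]
    exact parallelogram_law_with_norm_mul 𝕜 _ _

theorem exists_linearEquiv_adjoint_eq [FiniteDimensional 𝕜 F]
    (S : E ≃ₗ[𝕜] F) : ∃ L : F ≃ₗ[𝕜] E, LinearMap.adjoint (L : F →ₗ[𝕜] E) = S := by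
  refine ⟨.ofLinearMap (LinearMap.adjoint S) (LinearMap.adjoint S.symm) ?_ ?_,
    LinearMap.adjoint_adjoint _⟩ <;>
    rw [← LinearMap.adjoint_comp] <;> simp

end RCLike

section Complex

variable {E F : Type*} [NormedAddCommGroup E] [InnerProductSpace ℂ E]
  [NormedAddCommGroup F] [InnerProductSpace ℂ F]

theorem image_re_inner_orthogonalProjectionOnto (V : Submodule ℂ E) [V.HasOrthogonalProjection]
    (K : Set E) {u : E} (hu : u ∈ V) :
    (fun y => re ⟪u, y⟫_ℂ) '' ((fun x => (V.orthogonalProjectionOnto x : E)) '' K)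
      = (fun x => re ⟪u, x⟫_ℂ) '' K := by
  rw [Set.image_image]
  refine Set.image_congr fun x _ => ?_
  rw [← V.starProjection_apply, ← inner_starProjection_left_eq_right,
    V.starProjection_eq_self_iff.mpr hu]

theorem exists_forall_eq_re_inner [FiniteDimensional ℂ E] (φ : E →ₗ[ℝ] ℝ) :
    ∃ w : E, ∀ x, φ x = re ⟪w, x⟫_ℂ := by
  refine ⟨(InnerProductSpace.toDual ℂ E).symm
    (LinearMap.toContinuousLinearMap (Module.Dual.extendRCLike (𝕜 := ℂ) φ)), fun x => ?_⟩
  rw [InnerProductSpace.toDual_symm_apply]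
  exact (Module.Dual.re_extendRCLike_apply (𝕜 := ℂ) φ x).symm

theorem exists_forall_eq_re_inner_of_span_pair [FiniteDimensional ℂ E] (l : E → ℝ)
    (hl : ∀ u v : E, ∃ c : E, ∀ w ∈ span ℂ {u, v}, l w = re ⟪w, c⟫_ℂ) :
    ∃ c : E, ∀ w, l w = re ⟪w, c⟫_ℂ := by
  have hu : ∀ u v : E, u ∈ span ℂ {u, v} := fun u v => subset_span (by simp)
  have hv : ∀ u v : E, v ∈ span ℂ {u, v} := fun u v => subset_span (by simp)
  let φ : E →ₗ[ℝ] ℝ :=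
    { toFun := l
      map_add' := fun u v => by
        obtain ⟨c, hc⟩ := hl u v
        rw [hc _ (add_mem (hu u v) (hv u v)), hc u (hu u v), hc v (hv u v), inner_add_left,
          add_re]
      map_smul' := fun r u => by
        obtain ⟨c, hc⟩ := hl u u
        rw [RCLike.real_smul_eq_coe_smul (K := ℂ), hc _ (smul_mem _ _ (hu u u)),
          hc u (hu u u), inner_smul_left]
        simp }
  obtain ⟨c, hc⟩ := exists_forall_eq_re_inner φ
  exact ⟨c, fun w => (hc w).trans (inner_re_symm (𝕜 := ℂ) c w)⟩

theorem exists_eq_re_inner_add_norm_of_span_pair [FiniteDimensional ℂ E] (h : E → ℝ)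
    (hloc : ∀ u v : E, ∃ (c : E) (T : E →ₗ[ℂ] F),
      ∀ w ∈ span ℂ {u, v}, h w = re ⟪w, c⟫_ℂ + ‖T w‖)
    (hwidth : ∀ w ≠ 0, 0 < h w + h (-w)) :
    ∃ (c : E) (S : E ≃ₗ[ℂ] E), ∀ w, h w = re ⟪w, c⟫_ℂ + ‖S w‖ := by
  have hparts : ∀ u v : E, ∃ (c : E) (T : E →ₗ[ℂ] F), ∀ w ∈ span ℂ {u, v},
      (h w - h (-w)) / 2 = re ⟪w, c⟫_ℂ ∧ (h w + h (-w)) / 2 = ‖T w‖ := by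
    intro u v
    obtain ⟨c, T, hT⟩ := hloc u v
    refine ⟨c, T, fun w hw => ?_⟩
    rw [hT w hw, hT (-w) (neg_mem hw), inner_neg_left, neg_re, map_neg, norm_neg]
    constructor <;> ring
  obtain ⟨c, hc⟩ := exists_forall_eq_re_inner_of_span_pair (fun w => (h w - h (-w)) / 2)
    fun u v => (hparts u v).imp fun _ ⟨_, hT⟩ w hw => (hT w hw).1
  obtain ⟨S, hS⟩ := exists_linearEquiv_norm_eq_of_span_pair (fun w => (h w + h (-w)) / 2)
    (fun u v => (hparts u v).elim fun _ ⟨T, hT⟩ => ⟨T, fun w hw => (hT w hw).2⟩)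
    fun w hw => half_pos (hwidth w hw)
  exact ⟨c, S, fun w => by linarith [hc w, hS w]⟩

theorem isGreatest_re_inner_closedBall (w : E) :
    IsGreatest ((fun z => re ⟪w, z⟫_ℂ) '' Metric.closedBall 0 1) ‖w‖ := by
  refine ⟨⟨((‖w‖⁻¹ : ℝ) : ℂ) • w, ?_, ?_⟩, ?_⟩
  · rw [mem_closedBall_zero_iff, norm_smul, norm_real, norm_inv, norm_norm]
    exact inv_mul_le_one_of_le₀ le_rfl (norm_nonneg _)
  · rcases eq_or_ne w 0 with rfl | hw
    · simp
    · simp [inner_self_eq_norm_sq_to_K, hw, sq]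
  · rintro _ ⟨z, hz, rfl⟩
    calc re ⟪w, z⟫_ℂ ≤ ‖w‖ * ‖z‖ := (re_le_norm _).trans (norm_inner_le_norm w z)
      _ ≤ ‖w‖ := mul_le_of_le_one_right (norm_nonneg w) (mem_closedBall_zero_iff.mp hz)

theorem isGreatest_re_inner_image_closedBall [FiniteDimensional ℂ E] [FiniteDimensional ℂ F]
    (L : E →ₗ[ℂ] F) (c u : F) :
    IsGreatest ((fun y => re ⟪u, y⟫_ℂ) '' ((fun z => L z + c) '' Metric.closedBall 0 1))
      (re ⟪u, c⟫_ℂ + ‖LinearMap.adjoint L u‖) := by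
  have := (monotone_id.const_add (re ⟪u, c⟫_ℂ)).map_isGreatest
    (isGreatest_re_inner_closedBall (LinearMap.adjoint L u))
  simpa [Set.image_image, inner_add_right, LinearMap.adjoint_inner_left, add_comm] using this

theorem convex_image_closedBall (L : E →ₗ[ℂ] F) (c : F) :
    Convex ℝ ((fun z => L z + c) '' Metric.closedBall 0 1) := by
  simpa [Set.image_image, add_comm] using
    ((convex_closedBall (0 : E) 1).linear_image (L.restrictScalars ℝ)).translate c

theorem isCompact_image_closedBall [FiniteDimensional ℂ E] (L : E →ₗ[ℂ] F) (c : F) :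
    IsCompact ((fun z => L z + c) '' Metric.closedBall 0 1) :=
  (isCompact_closedBall 0 1).image (L.continuous_of_finiteDimensional.add continuous_const)

theorem subset_of_forall_exists_re_inner_le [FiniteDimensional ℂ E] {K L : Set E}
    (hL : Convex ℝ L) (hLc : IsClosed L)
    (h : ∀ u, ∀ x ∈ K, ∃ y ∈ L, re ⟪u, x⟫_ℂ ≤ re ⟪u, y⟫_ℂ) : K ⊆ L := by
  intro x hx
  by_contra hxL
  obtain ⟨φ, s, hφL, hφx⟩ := geometric_hahn_banach_closed_point hL hLc hxL
  obtain ⟨w, hw⟩ := exists_forall_eq_re_inner φ.toLinearMap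
  obtain ⟨y, hy, hxy⟩ := h w x hx
  have hφy := hφL y hy
  rw [← ContinuousLinearMap.coe_coe, hw] at hφx hφy
  linarith

theorem eq_of_forall_isGreatest_re_inner [FiniteDimensional ℂ E] {K L : Set E}
    (hK : Convex ℝ K) (hKc : IsClosed K) (hL : Convex ℝ L) (hLc : IsClosed L) {h : E → ℝ}
    (hKh : ∀ u, IsGreatest ((fun x => re ⟪u, x⟫_ℂ) '' K) (h u))
    (hLh : ∀ u, IsGreatest ((fun x => re ⟪u, x⟫_ℂ) '' L) (h u)) : K = L := by
  have key : ∀ {A B : Set E}, (∀ u, IsGreatest ((fun x => re ⟪u, x⟫_ℂ) '' A) (h u)) →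
      (∀ u, IsGreatest ((fun x => re ⟪u, x⟫_ℂ) '' B) (h u)) →
      ∀ u, ∀ x ∈ A, ∃ y ∈ B, re ⟪u, x⟫_ℂ ≤ re ⟪u, y⟫_ℂ := by
    intro A B hA hB u x hx
    obtain ⟨y, hy, hyu⟩ := (hB u).1
    exact ⟨y, hy, ((hA u).2 ⟨x, hx, rfl⟩).trans hyu.ge⟩
  exact (subset_of_forall_exists_re_inner_le hL hLc (key hKh hLh)).antisymm
    (subset_of_forall_exists_re_inner_le hK hKc (key hLh hKh))

theorem exists_re_inner_lt_of_mem_interior {K : Set E} {x u : E} (hx : x ∈ interior K)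
    (hu : u ≠ 0) : ∃ y ∈ K, re ⟪u, x⟫_ℂ < re ⟪u, y⟫_ℂ := by
  have hcont : Continuous fun t : ℝ => x + (t : ℂ) • u := by fun_prop
  have hK : ∀ᶠ t : ℝ in 𝓝[>] 0, x + (t : ℂ) • u ∈ K :=
    nhdsWithin_le_nhds (hcont.tendsto' 0 x (by simp) (mem_interior_iff_mem_nhds.mp hx))
  obtain ⟨t, htK, ht⟩ := (hK.and self_mem_nhdsWithin).exists
  refine ⟨_, htK, ?_⟩
  have hpos : 0 < t * ‖u‖ ^ 2 := by have := norm_pos_iff.mpr hu; positivity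
  have : re ⟪u, x + (t : ℂ) • u⟫_ℂ = re ⟪u, x⟫_ℂ + t * ‖u‖ ^ 2 := by
    simp [inner_self_eq_norm_sq_to_K, ← ofReal_pow]
  linarith

theorem add_neg_pos_of_isGreatest_re_inner {K : Set E} {h : E → ℝ}
    (hK : ∀ u, IsGreatest ((fun x => re ⟪u, x⟫_ℂ) '' K) (h u)) {x : E} (hx : x ∈ interior K)
    {w : E} (hw : w ≠ 0) : 0 < h w + h (-w) := by
  obtain ⟨y, hy, hxy⟩ := exists_re_inner_lt_of_mem_interior hx hw
  obtain ⟨y', hy', hxy'⟩ := exists_re_inner_lt_of_mem_interior hx (neg_ne_zero.mpr hw)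
  have hwy := (hK w).2 ⟨y, hy, rfl⟩
  have hwy' := (hK (-w)).2 ⟨y', hy', rfl⟩
  simp only [inner_neg_left, neg_re] at hxy' hwy'
  linarith

end Complex

theorem exists_isGreatest_re_inner_of_isEllipsoidOfDim {n k : ℕ}
    (K : Set (EuclideanSpace ℂ (Fin n))) (V : Submodule ℂ (EuclideanSpace ℂ (Fin n)))
    (hV : IsEllipsoidOfDim k
      ((fun x => (V.orthogonalProjectionOnto x : EuclideanSpace ℂ (Fin n))) '' K)) :
    ∃ (c : EuclideanSpace ℂ (Fin n))
      (T : EuclideanSpace ℂ (Fin n) →ₗ[ℂ] EuclideanSpace ℂ (Fin k)),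
      ∀ u ∈ V, IsGreatest ((fun x => re ⟪u, x⟫_ℂ) '' K) (re ⟪u, c⟫_ℂ + ‖T u‖) := by
  obtain ⟨f, c, -, hf⟩ := hV
  refine ⟨c, LinearMap.adjoint f, fun u hu => ?_⟩
  rw [← image_re_inner_orthogonalProjectionOnto V K hu, hf]
  exact isGreatest_re_inner_image_closedBall f c u

theorem stmt18 {n k : ℕ} (hk : 2 ≤ k) (hkn : k < n)
    (K : Set (EuclideanSpace ℂ (Fin n))) (hK : IsConvexBody K)
    (hproj : ∀ V : Submodule ℂ (EuclideanSpace ℂ (Fin n)), Module.finrank ℂ V = k →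
      IsEllipsoidOfDim k
        ((fun x => (V.orthogonalProjection x : EuclideanSpace ℂ (Fin n))) '' K)) :
    IsComplexEllipsoid K := by
  obtain ⟨hKc, hKconv, x₀, hx₀⟩ := hK
  set h := fun u => sSup ((fun x => re ⟪u, x⟫_ℂ) '' K)
  have hmax : ∀ u, IsGreatest ((fun x => re ⟪u, x⟫_ℂ) '' K) (h u) := fun u =>
    (hKc.image (by fun_prop)).isGreatest_sSup (Set.Nonempty.image _ ⟨x₀, interior_subset hx₀⟩)
  have hloc : ∀ u v, ∃ (c : EuclideanSpace ℂ (Fin n))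
      (T : EuclideanSpace ℂ (Fin n) →ₗ[ℂ] EuclideanSpace ℂ (Fin k)),
      ∀ w ∈ span ℂ {u, v}, h w = re ⟪w, c⟫_ℂ + ‖T w‖ := by
    intro u v
    obtain ⟨V, hV, hu, hv⟩ :=
      exists_finrank_eq_mem_mem hk (by rw [finrank_euclideanSpace_fin]; exact hkn.le) u v
    obtain ⟨c, T, hT⟩ := exists_isGreatest_re_inner_of_isEllipsoidOfDim K V (hproj V hV)
    have hle : span ℂ {u, v} ≤ V := span_le.mpr (Set.insert_subset hu (by simpa using hv))
    exact ⟨c, T, fun w hw => (hmax w).unique (hT w (hle hw))⟩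
  obtain ⟨c, S, hS⟩ := exists_eq_re_inner_add_norm_of_span_pair h hloc
    fun w hw => add_neg_pos_of_isGreatest_re_inner hmax hx₀ hw
  obtain ⟨L, hL⟩ := exists_linearEquiv_adjoint_eq S
  refine ⟨L, c, eq_of_forall_isGreatest_re_inner hKconv hKc.isClosed
    (convex_image_closedBall L.toLinearMap c)
    (isCompact_image_closedBall L.toLinearMap c).isClosed hmax fun u => ?_⟩
  simpa only [hS, hL, LinearEquiv.coe_coe] using
    isGreatest_re_inner_image_closedBall L.toLinearMap c u
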